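/- arXiv:2102.04907 — 7 statements merged into one kernel-verified Lean document; each statement's English description precedes it below -/
import Mathlib

section
/- Let φ be a CNF formula over variables indexed by Fin n with clauses C_1, …, C_k, each clause a nonempty finite set of literals (a literal being a pair (j, b) with j : Fin n, b : Bool). Call a finite set S of literals a hitting set for φ if for every j : Fin n, S contains (j, true) or (j, false), and for every clause C_i, S ∩ C_i is nonempty. Then hitting sets exist, every hitting set has cardinality at least n, and the minimum cardinality of a hitting set equals n if and only if φ is satisfiable. -/
/-- `S` is a hitting set for the CNF formula with clauses `C`: it contains a
literal for every variable and intersects every clause. -/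
def IsHittingSet (n k : ℕ) (C : Fin k → Finset (Fin n × Bool))
    (S : Finset (Fin n × Bool)) : Prop :=
  (∀ j : Fin n, (j, true) ∈ S ∨ (j, false) ∈ S) ∧ ∀ i, (S ∩ C i).Nonempty

/-- hitting sets exist, every hitting set has cardinality at
least `n`, and the minimum cardinality of a hitting set equals `n` iff the
CNF formula is satisfiable. -/
theorem hittingSet_exists_card_ge_and_min_eq_iff_satisfiable
    (n k : ℕ) (C : Fin k → Finset (Fin n × Bool))
    (hC : ∀ i, (C i).Nonempty) :
    (∃ S, IsHittingSet n k C S) ∧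
    (∀ S, IsHittingSet n k C S → n ≤ S.card) ∧
    (sInf {m | ∃ S, IsHittingSet n k C S ∧ S.card = m} = n ↔
      ∃ α : Fin n → Bool, ∀ i, ∃ l ∈ C i, α l.1 = l.2) := by
  classical
  have hge : ∀ S, IsHittingSet n k C S → n ≤ S.card := by
    intro S hS
    have h : (Finset.univ : Finset (Fin n)).card ≤ S.card := by
      apply Finset.card_le_card_of_injOn
        (fun j => ((j, if (j, true) ∈ S then true else false) : Fin n × Bool))
      · intro j _
        rcases hS.1 j with h | h
        · simp [h]
        · by_cases h' : (j, true) ∈ S <;> simp [h, h']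
      · intro a _ b _ hab
        exact congrArg Prod.fst hab
    simpa using h
  have huniv : IsHittingSet n k C Finset.univ := by
    refine ⟨fun j => Or.inl (Finset.mem_univ _), fun i => ?_⟩
    obtain ⟨l, hl⟩ := hC i
    exact ⟨l, Finset.mem_inter.2 ⟨Finset.mem_univ _, hl⟩⟩
  refine ⟨⟨Finset.univ, huniv⟩, hge, ?_⟩
  constructor
  · intro hmin
    have hne : {m | ∃ S, IsHittingSet n k C S ∧ S.card = m}.Nonempty :=
      ⟨_, Finset.univ, huniv, rfl⟩
    have hmem := Nat.sInf_mem hne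
    rw [hmin] at hmem
    obtain ⟨S, hS, hcard⟩ := hmem
    set α : Fin n → Bool := fun j => if (j, true) ∈ S then true else false with hα
    have hmemS : ∀ j, (j, α j) ∈ S := by
      intro j
      rcases hS.1 j with h | h
      · simp [hα, h]
      · by_cases h' : (j, true) ∈ S <;> simp [hα, h, h']
    have hSeq : S = Finset.univ.image (fun j => (j, α j)) := by
      symm
      apply Finset.eq_of_subset_of_card_le
      · intro x hx
        simp only [Finset.mem_image, Finset.mem_univ, true_and] at hx
        obtain ⟨j, hj⟩ := hx
        exact hj ▸ hmemS j
      · rw [hcard, Finset.card_image_of_injective _ (fun a b hab => congrArg Prod.fst hab)]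
        simp
    refine ⟨α, fun i => ?_⟩
    obtain ⟨l, hl⟩ := hS.2 i
    rw [Finset.mem_inter] at hl
    refine ⟨l, hl.2, ?_⟩
    have hl1 := hl.1
    rw [hSeq] at hl1
    simp only [Finset.mem_image, Finset.mem_univ, true_and] at hl1
    obtain ⟨j, hj⟩ := hl1
    have h1 : l.1 = j := by rw [← hj]
    have h2 : l.2 = α j := by rw [← hj]
    rw [h1, h2]
  · rintro ⟨α, hα⟩
    set S : Finset (Fin n × Bool) := Finset.univ.image (fun j => (j, α j)) with hSdef
    have hS : IsHittingSet n k C S := by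
      constructor
      · intro j
        cases h : α j
        · exact Or.inr (Finset.mem_image.2 ⟨j, Finset.mem_univ j, by rw [h]⟩)
        · exact Or.inl (Finset.mem_image.2 ⟨j, Finset.mem_univ j, by rw [h]⟩)
      · intro i
        obtain ⟨l, hl, hal⟩ := hα i
        refine ⟨l, Finset.mem_inter.2 ⟨?_, hl⟩⟩
        simp only [hSdef, Finset.mem_image, Finset.mem_univ, true_and]
        exact ⟨l.1, by rw [hal]⟩
    have hcard : S.card = n := by
      rw [hSdef, Finset.card_image_of_injective _ (fun a b hab => congrArg Prod.fst hab)]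
      simp
    apply le_antisymm
    · exact Nat.sInf_le ⟨S, hS, hcard⟩
    · refine le_csInf ⟨n, ⟨S, hS, hcard⟩⟩ ?_
      rintro m ⟨T, hT, rfl⟩
      exact hge T hT
end

section
/- Let φ be a CNF formula over variables indexed by Fin n with clauses C_1, …, C_k (each clause a finite set of literals, a literal being a pair (j, b) with j : Fin n, b : Bool). If S is a finite set of literals with |S| = n such that for every j : Fin n, S contains (j, true) or (j, false), and for every clause C_i, S ∩ C_i is nonempty, then for each j exactly one of (j, true), (j, false) lies in S, and the assignment α defined by α j = b for the unique (j, b) ∈ S satisfies φ. -/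
/-- a hitting set of cardinality exactly `n` contains exactly one
of `(j, true)`, `(j, false)` for each variable `j`, and the assignment it
encodes satisfies the CNF formula. -/
theorem card_n_hitting_set_unique_literal_and_satisfies
    (n k : ℕ) (C : Fin k → Finset (Fin n × Bool))
    (S : Finset (Fin n × Bool)) (hcard : S.card = n)
    (hvar : ∀ j : Fin n, (j, true) ∈ S ∨ (j, false) ∈ S)
    (hcl : ∀ i, (S ∩ C i).Nonempty) :
    (∀ j : Fin n, ∃! b : Bool, (j, b) ∈ S) ∧
    ∀ α : Fin n → Bool, (∀ j : Fin n, ∀ b : Bool, (j, b) ∈ S → α j = b) →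
      ∀ i, ∃ l ∈ C i, α l.1 = l.2 := by
  have himg : S.image Prod.fst = Finset.univ := by
    apply Finset.eq_univ_of_forall
    intro j
    rcases hvar j with h | h
    · exact Finset.mem_image.2 ⟨(j, true), h, rfl⟩
    · exact Finset.mem_image.2 ⟨(j, false), h, rfl⟩
  have hinj : Set.InjOn Prod.fst (S : Set (Fin n × Bool)) := by
    apply Finset.injOn_of_card_image_eq
    rw [himg, Finset.card_univ, Fintype.card_fin, hcard]
  constructor
  · intro j
    rcases hvar j with h | h
    · exact ⟨true, h, fun b hb => congrArg Prod.snd (hinj hb h rfl)⟩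
    · exact ⟨false, h, fun b hb => congrArg Prod.snd (hinj hb h rfl)⟩
  · intro α hα i
    obtain ⟨l, hl⟩ := hcl i
    rw [Finset.mem_inter] at hl
    exact ⟨l, hl.2, hα l.1 l.2 hl.1⟩
end

section
/- Define the reverted AND/OR DAG G'_φ associated to a CNF formula φ over variables Fin n with clauses C_1, …, C_k (each a nonempty finite set of literals (j, b)): the root P is an OR node whose children are the AND nodes C_1, …, C_k and X_1, …, X_n; each AND node X_j has the two leaves (j, true) and (j, false) as children; each AND node C_i has the literals occurring in C_i as leaf children. For a set L of leaves, define the nodes disproved by L inductively: a leaf is disproved iff it lies in L, an OR node is disproved iff all of its children are disproved, and an AND node is disproved iff at least one of its children is disproved. Then the true disproof number of P, i.e., the minimum cardinality of a set L of leaves for which P is disproved by L, equals the minimum cardinality of a finite set S of literals such that for every j, S contains (j, true) or (j, false), and for every clause C_i, S ∩ C_i is nonempty; in particular it equals n if and only if φ is satisfiable. -/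
/-- Nodes of the reverted AND/OR DAG `G'_φ` built from a CNF formula over
`Fin n` with `k` clauses: the OR root `P`, an AND node for each clause, an
AND node `X j` for each variable, and a leaf for each literal `(j, b)`. -/
inductive GNode' (n k : ℕ) : Type where
  | root : GNode' n k
  | clause : Fin k → GNode' n k
  | var : Fin n → GNode' n k
  | lit : Fin n × Bool → GNode' n k

/-- The nodes of `G'_φ` disproved by a set `L` of leaves (literals): a leaf is
disproved iff it lies in `L`, each AND node (`clause i` with children the
literals of `C i`, and `var j` with children `(j, true)` and `(j, false)`) is
disproved iff at least one child is disproved, and the OR root is disproved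
iff all of its children (all clause nodes and all variable nodes) are
disproved. -/
def GDisproved (n k : ℕ) (C : Fin k → Finset (Fin n × Bool))
    (L : Set (Fin n × Bool)) : GNode' n k → Prop
  | .lit l => l ∈ L
  | .var j => (j, true) ∈ L ∨ (j, false) ∈ L
  | .clause i => ∃ l ∈ C i, l ∈ L
  | .root => (∀ i, ∃ l ∈ C i, l ∈ L) ∧ ∀ j : Fin n, (j, true) ∈ L ∨ (j, false) ∈ L

/-- the true disproof number of the root `P` of `G'_φ` (the
minimum cardinality of a set of leaves disproving `P`) equals the minimum
cardinality of a set of literals hitting every variable pair and every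
clause; in particular it equals `n` iff the CNF formula is satisfiable. -/
theorem trueDisproofNumber_root_eq_min_hittingSet_card_and_eq_n_iff_sat
    (n k : ℕ) (C : Fin k → Finset (Fin n × Bool))
    (hC : ∀ i, (C i).Nonempty) :
    (sInf {m | ∃ L : Finset (Fin n × Bool),
        GDisproved n k C ↑L GNode'.root ∧ L.card = m} =
      sInf {m | ∃ S : Finset (Fin n × Bool),
        ((∀ j : Fin n, (j, true) ∈ S ∨ (j, false) ∈ S) ∧
          ∀ i, (S ∩ C i).Nonempty) ∧ S.card = m}) ∧
    (sInf {m | ∃ L : Finset (Fin n × Bool),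
        GDisproved n k C ↑L GNode'.root ∧ L.card = m} = n ↔
      ∃ α : Fin n → Bool, ∀ i, ∃ l ∈ C i, α l.1 = l.2) := by
  classical
  have hroot : ∀ L : Finset (Fin n × Bool),
      GDisproved n k C ↑L GNode'.root ↔
      ((∀ i, ∃ l ∈ C i, l ∈ L) ∧ ∀ j : Fin n, (j, true) ∈ L ∨ (j, false) ∈ L) := by
    intro L
    constructor
    · rintro ⟨h1, h2⟩
      exact ⟨fun i => by simpa using h1 i, fun j => by simpa using h2 j⟩
    · rintro ⟨h1, h2⟩
      exact ⟨fun i => by simpa using h1 i, fun j => by simpa using h2 j⟩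
  -- lower bound: any disproving set has card ≥ n
  have key : ∀ L : Finset (Fin n × Bool),
      GDisproved n k C ↑L GNode'.root → n ≤ L.card := by
    intro L hL
    obtain ⟨h1, h2⟩ := (hroot L).1 hL
    set g : Fin n → Fin n × Bool := fun j => (j, if (j, true) ∈ L then true else false) with hg
    have hginj : Function.Injective g := fun a b hab => congrArg Prod.fst hab
    have hsub : Finset.univ.image g ⊆ L := by
      intro l hl
      simp only [Finset.mem_image, Finset.mem_univ, true_and] at hl
      obtain ⟨j, rfl⟩ := hl
      by_cases h : (j, true) ∈ L
      · simpa [hg, h] using h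
      · rcases h2 j with h' | h'
        · exact absurd h' h
        · simpa [hg, h] using h'
    calc n = (Finset.univ.image g).card := by
            rw [Finset.card_image_of_injective _ hginj, Finset.card_univ, Fintype.card_fin]
      _ ≤ L.card := Finset.card_le_card hsub
  -- candidate witness when a satisfying assignment exists
  have mkL : ∀ α : Fin n → Bool, (∀ i, ∃ l ∈ C i, α l.1 = l.2) →
      ∃ L : Finset (Fin n × Bool), GDisproved n k C ↑L GNode'.root ∧ L.card = n := by
    intro α hα
    refine ⟨Finset.univ.image (fun j => (j, α j)), ?_, ?_⟩
    · rw [hroot]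
      constructor
      · intro i
        obtain ⟨l, hl, hal⟩ := hα i
        refine ⟨l, hl, ?_⟩
        simp only [Finset.mem_image, Finset.mem_univ, true_and]
        exact ⟨l.1, by rw [hal]⟩
      · intro j
        cases h : α j
        · right; simp only [Finset.mem_image, Finset.mem_univ, true_and]
          exact ⟨j, by rw [h]⟩
        · left; simp only [Finset.mem_image, Finset.mem_univ, true_and]
          exact ⟨j, by rw [h]⟩
    · rw [Finset.card_image_of_injective _ (fun a b hab => congrArg Prod.fst hab),
        Finset.card_univ, Fintype.card_fin]
  constructor
  · congr 1
    ext m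
    simp only [Set.mem_setOf_eq]
    constructor
    · rintro ⟨L, hL, rfl⟩
      obtain ⟨h1, h2⟩ := (hroot L).1 hL
      refine ⟨L, ⟨h2, fun i => ?_⟩, rfl⟩
      obtain ⟨l, hl, hL'⟩ := h1 i
      exact ⟨l, Finset.mem_inter.2 ⟨hL', hl⟩⟩
    · rintro ⟨S, ⟨h2, h1⟩, rfl⟩
      refine ⟨S, (hroot S).2 ⟨fun i => ?_, h2⟩, rfl⟩
      obtain ⟨l, hl⟩ := h1 i
      exact ⟨l, (Finset.mem_inter.1 hl).2, (Finset.mem_inter.1 hl).1⟩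
  · constructor
    · intro h
      have hne : {m | ∃ L : Finset (Fin n × Bool),
          GDisproved n k C ↑L GNode'.root ∧ L.card = m}.Nonempty := by
        refine ⟨(Finset.univ : Finset (Fin n × Bool)).card, Finset.univ, ?_, rfl⟩
        rw [hroot]
        exact ⟨fun i => (hC i).imp (fun l hl => ⟨hl, Finset.mem_univ l⟩),
          fun j => Or.inl (Finset.mem_univ _)⟩
      obtain ⟨L, hL, hcard⟩ := Nat.sInf_mem hne
      rw [h] at hcard
      obtain ⟨h1, h2⟩ := (hroot L).1 hL
      set α : Fin n → Bool := fun j => if (j, true) ∈ L then true else false with hα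
      set g : Fin n → Fin n × Bool := fun j => (j, α j) with hg
      have hginj : Function.Injective g := fun a b hab => congrArg Prod.fst hab
      have hsub : Finset.univ.image g ⊆ L := by
        intro l hl
        simp only [Finset.mem_image, Finset.mem_univ, true_and] at hl
        obtain ⟨j, rfl⟩ := hl
        by_cases h : (j, true) ∈ L
        · simpa [hg, hα, h] using h
        · rcases h2 j with h' | h'
          · exact absurd h' h
          · simpa [hg, hα, h] using h'
      have heq : Finset.univ.image g = L := by
        apply Finset.eq_of_subset_of_card_le hsub
        rw [Finset.card_image_of_injective _ hginj, Finset.card_univ, Fintype.card_fin, hcard]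
      refine ⟨α, fun i => ?_⟩
      obtain ⟨l, hl, hL'⟩ := h1 i
      rw [← heq] at hL'
      simp only [Finset.mem_image, Finset.mem_univ, true_and] at hL'
      obtain ⟨j, hj⟩ := hL'
      refine ⟨l, hl, ?_⟩
      have : l.1 = j := (congrArg Prod.fst hj).symm
      rw [this, ← congrArg Prod.snd hj]
    · rintro ⟨α, hα⟩
      obtain ⟨L, hL, hcard⟩ := mkL α hα
      apply le_antisymm
      · exact Nat.sInf_le ⟨L, hL, hcard⟩
      · have hne : {m | ∃ L : Finset (Fin n × Bool),
            GDisproved n k C ↑L GNode'.root ∧ L.card = m}.Nonempty := ⟨n, L, hL, hcard⟩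
        obtain ⟨L', hL', hcard'⟩ := Nat.sInf_mem hne
        rw [← hcard']
        exact key L' hL'
end

section
/- Let G be a finite AND/OR DAG (a finite directed acyclic graph whose non-leaf nodes are each labeled AND or OR) with root r, and suppose every leaf is reachable from r. Define the recursive proof number pn : nodes → ℕ∞ by pn(x) = 1 if x is a leaf, pn(x) = min over children y of pn(y) if x is an OR node, and pn(x) = sum over children y of pn(y) if x is an AND node. Define the true proof number of r as the minimum cardinality of a set L of leaves such that r is solved by L, where a leaf is solved iff it lies in L, an OR node is solved iff some child is solved, and an AND node is solved iff all children are solved. Then pn(r) is at least the true proof number of r. -/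
/-- in a finite AND/OR DAG (given by a well-founded children
relation and an AND/OR labelling of the non-leaf nodes) with root `r` from
which every leaf is reachable, the recursively computed proof number
(`pn = 1` at leaves, `min` of children at OR nodes, sum of children at AND
nodes, valued in `ℕ∞`) is at least the true proof number of `r`, i.e. the
minimum cardinality of a set `L` of leaves such that `r` is solved by `L`
(leaf: iff in `L`; OR node: iff some child solved; AND node: iff all
children solved). -/
theorem recursive_proofNumber_ge_trueProofNumber_in_dag
    (V : Type) [Fintype V] [DecidableEq V]
    (children : V → Finset V) (isAnd : V → Bool) (r : V)
    (hwf : WellFounded fun a b : V => a ∈ children b)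
    (hreach : ∀ x : V, children x = ∅ →
      Relation.ReflTransGen (fun a b : V => b ∈ children a) r x)
    (pn : V → ℕ∞)
    (hpnLeaf : ∀ x, children x = ∅ → pn x = 1)
    (hpnOr : ∀ x, children x ≠ ∅ → isAnd x = false →
      pn x = ⨅ y ∈ children x, pn y)
    (hpnAnd : ∀ x, children x ≠ ∅ → isAnd x = true →
      pn x = ∑ y ∈ children x, pn y)
    (solved : Set V → V → Prop)
    (hsLeaf : ∀ (L : Set V) (x : V), children x = ∅ → (solved L x ↔ x ∈ L))
    (hsOr : ∀ (L : Set V) (x : V), children x ≠ ∅ → isAnd x = false →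
      (solved L x ↔ ∃ y ∈ children x, solved L y))
    (hsAnd : ∀ (L : Set V) (x : V), children x ≠ ∅ → isAnd x = true →
      (solved L x ↔ ∀ y ∈ children x, solved L y)) :
    sInf {m : ℕ∞ | ∃ L : Finset V, (∀ x ∈ L, children x = ∅) ∧
      solved ↑L r ∧ (L.card : ℕ∞) = m} ≤ pn r := by
  classical
  have mono : ∀ x : V, ∀ L L' : Set V, L ⊆ L' → solved L x → solved L' x := by
    intro x
    induction x using hwf.induction with
    | _ x ih =>
      intro L L' hLL hs
      by_cases hc : children x = ∅
      · rw [hsLeaf L x hc] at hs; rw [hsLeaf L' x hc]; exact hLL hs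
      · cases hA : isAnd x
        · rw [hsOr L x hc hA] at hs; rw [hsOr L' x hc hA]
          obtain ⟨y, hy, hsy⟩ := hs
          exact ⟨y, hy, ih y hy L L' hLL hsy⟩
        · rw [hsAnd L x hc hA] at hs; rw [hsAnd L' x hc hA]
          intro y hy; exact ih y hy L L' hLL (hs y hy)
  have main : ∀ x : V, pn x = ⊤ ∨ ∃ L : Finset V, (∀ z ∈ L, children z = ∅) ∧
      solved ↑L x ∧ (L.card : ℕ∞) ≤ pn x := by
    intro x
    induction x using hwf.induction with
    | _ x ih =>
      by_cases hc : children x = ∅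
      · right
        refine ⟨{x}, ?_, ?_, ?_⟩
        · intro z hz; rw [Finset.mem_singleton] at hz; subst hz; exact hc
        · rw [hsLeaf _ x hc]; simp
        · rw [hpnLeaf x hc]; simp
      · cases hA : isAnd x
        · -- OR node
          rw [hpnOr x hc hA]
          have hne : (children x).Nonempty := Finset.nonempty_iff_ne_empty.mpr hc
          obtain ⟨y, hy, hinf⟩ := Finset.exists_mem_eq_inf (children x) hne pn
          have hinf' : ⨅ z ∈ children x, pn z = pn y := by
            rw [← Finset.inf_eq_iInf]; exact hinf
          rw [hinf']
          rcases ih y hy with h | ⟨L, h1, h2, h3⟩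
          · left; exact h
          · right; exact ⟨L, h1, (hsOr _ x hc hA).mpr ⟨y, hy, h2⟩, h3⟩
        · -- AND node
          rw [hpnAnd x hc hA]
          by_cases htop : ∃ y ∈ children x, pn y = ⊤
          · left
            obtain ⟨y, hy, h⟩ := htop
            have : (⊤ : ℕ∞) ≤ ∑ z ∈ children x, pn z := by
              rw [← h]
              exact Finset.single_le_sum (fun i _ => zero_le) hy
            exact top_le_iff.mp this
          · right
            push_neg at htop
            have hch : ∀ y ∈ children x, ∃ L : Finset V,
                (∀ z ∈ L, children z = ∅) ∧ solved ↑L y ∧ (L.card : ℕ∞) ≤ pn y := by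
              intro y hy
              rcases ih y hy with h | h
              · exact absurd h (htop y hy)
              · exact h
            choose! f hf1 hf2 hf3 using hch
            refine ⟨(children x).biUnion f, ?_, ?_, ?_⟩
            · intro z hz
              rw [Finset.mem_biUnion] at hz
              obtain ⟨y, hy, hzy⟩ := hz
              exact hf1 y hy z hzy
            · rw [hsAnd _ x hc hA]
              intro y hy
              refine mono y (↑(f y)) _ ?_ (hf2 y hy)
              exact Finset.coe_subset.mpr (Finset.subset_biUnion_of_mem f hy)
            · calc ((((children x).biUnion f).card : ℕ) : ℕ∞)
                  ≤ ((∑ y ∈ children x, (f y).card : ℕ) : ℕ∞) := by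
                    exact_mod_cast Finset.card_biUnion_le
                _ = ∑ y ∈ children x, ((f y).card : ℕ∞) := by push_cast; rfl
                _ ≤ ∑ y ∈ children x, pn y := Finset.sum_le_sum hf3
  rcases main r with h | ⟨L, h1, h2, h3⟩
  · rw [h]; exact le_top
  · exact le_trans (sInf_le ⟨L, h1, h2, rfl⟩) h3
end

section
/- For odd n ≥ 1, consider the diamond-shaped all-AND DAG with n layers: layer 0 is a single root, the layer sizes are 1, 2, …, (n+1)/2, …, 2, 1 (increasing by one up to the middle layer and then decreasing by one down to a single leaf), and node i of a layer has as children the nodes of the next layer adjacent to it in Pascal's-triangle fashion (node i in an expanding layer points to nodes i and i+1 of the next layer; node i in a contracting layer of size m points to those of nodes i−1 and i of the next layer that exist). Every non-leaf node is an AND node and the unique node of the last layer is the only leaf. Then the recursive proof number of the root (pn(leaf) = 1, pn(AND node) = sum of children's values) equals the central binomial coefficient C(n−1, (n−1)/2), while the true proof number of the root (the minimum number of leaves that must be assumed solvable for the root to be solvable) equals 1. -/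
/-- Size of layer `i` (0-indexed) of the diamond-shaped lattice DAG with `n`
layers: sizes grow `1, 2, …, (n+1)/2` up to the middle layer `(n-1)/2` and
then shrink back down to `1`. -/
def diamondSize (n i : ℕ) : ℕ := if i ≤ (n - 1) / 2 then i + 1 else n - i

/-- `p = (i, j)` is a node of the diamond lattice: layer `i < n`, index
`j < diamondSize n i`. -/
def diamondValid (n : ℕ) (p : ℕ × ℕ) : Prop :=
  p.1 < n ∧ p.2 < diamondSize n p.1

/-- Edges of the diamond lattice, in Pascal's-triangle fashion: in an
expanding layer, node `(i, j)` points to `(i+1, j)` and `(i+1, j+1)`; in a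
contracting layer it points to those of `(i+1, j-1)` and `(i+1, j)` that
exist. -/
def diamondEdge (n : ℕ) (p q : ℕ × ℕ) : Prop :=
  diamondValid n p ∧ diamondValid n q ∧ q.1 = p.1 + 1 ∧
    ((p.1 < (n - 1) / 2 ∧ (q.2 = p.2 ∨ q.2 = p.2 + 1)) ∨
     ((n - 1) / 2 ≤ p.1 ∧ (q.2 + 1 = p.2 ∨ q.2 = p.2)))


open Classical in
/-- The children of a node of the diamond lattice. -/
noncomputable def diamondChildren (n : ℕ) (p : ℕ × ℕ) : Finset (ℕ × ℕ) :=
  (Finset.range n ×ˢ Finset.range n).filter (diamondEdge n p)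

lemma dsize (k a : ℕ) : diamondSize (2*k+1) a = if a ≤ k then a + 1 else 2*k+1-a := by
  have h : (2*k+1-1)/2 = k := by omega
  simp [diamondSize, h]

lemma dvalid_iff (k a b : ℕ) :
    diamondValid (2*k+1) (a, b) ↔ a < 2*k+1 ∧ b < (if a ≤ k then a + 1 else 2*k+1-a) := by
  rw [diamondValid, dsize]

lemma edge_iff (k i j a b : ℕ) :
    diamondEdge (2*k+1) (i, j) (a, b) ↔
      (i < 2*k+1 ∧ j < (if i ≤ k then i + 1 else 2*k+1-i)) ∧
      (a < 2*k+1 ∧ b < (if a ≤ k then a + 1 else 2*k+1-a)) ∧ a = i + 1 ∧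
      ((i < k ∧ (b = j ∨ b = j + 1)) ∨ (k ≤ i ∧ (b + 1 = j ∨ b = j))) := by
  have h : (2*k+1-1)/2 = k := by omega
  simp only [diamondEdge, diamondValid, dsize, h]

lemma mem_children_iff (k : ℕ) (p : ℕ × ℕ) (a b : ℕ) :
    (a, b) ∈ diamondChildren (2*k+1) p ↔ diamondEdge (2*k+1) p (a, b) := by
  simp only [diamondChildren, Finset.mem_filter, Finset.mem_product, Finset.mem_range]
  constructor
  · exact fun h => h.2
  · intro h
    have h1 : a < 2*k+1 := h.2.1.1
    have h2 : b < diamondSize (2*k+1) a := h.2.1.2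
    rw [dsize] at h2
    refine ⟨⟨h1, ?_⟩, h⟩
    show b < 2*k+1
    split_ifs at h2 <;> omega

lemma children_expand (k i j : ℕ) (hi : i < k) (hj : j ≤ i) :
    diamondChildren (2*k+1) (i, j) = {(i+1, j), (i+1, j+1)} := by
  ext ⟨a, b⟩
  rw [mem_children_iff, edge_iff]
  simp only [Finset.mem_insert, Finset.mem_singleton, Prod.mk.injEq]
  split_ifs <;> (try simp only [false_or, or_false, false_and, and_false, true_and, and_true]) <;> omega

lemma children_contract_left (k i : ℕ) (hik : k ≤ i) (hi : i < 2*k) :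
    diamondChildren (2*k+1) (i, 0) = {(i+1, 0)} := by
  ext ⟨a, b⟩
  rw [mem_children_iff, edge_iff]
  simp only [Finset.mem_singleton, Prod.mk.injEq]
  split_ifs <;> (try simp only [false_or, or_false, false_and, and_false, true_and, and_true]) <;> omega

lemma children_contract_mid (k i j : ℕ) (hik : k ≤ i) (h0 : 0 < j) (hj : j < 2*k - i) :
    diamondChildren (2*k+1) (i, j) = {(i+1, j-1), (i+1, j)} := by
  ext ⟨a, b⟩
  rw [mem_children_iff, edge_iff]
  simp only [Finset.mem_insert, Finset.mem_singleton, Prod.mk.injEq]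
  split_ifs <;> (try simp only [false_or, or_false, false_and, and_false, true_and, and_true]) <;> omega

lemma children_contract_right (k i : ℕ) (hik : k ≤ i) (hi : i < 2*k) :
    diamondChildren (2*k+1) (i, 2*k-i) = {(i+1, 2*k-i-1)} := by
  ext ⟨a, b⟩
  rw [mem_children_iff, edge_iff]
  simp only [Finset.mem_singleton, Prod.mk.injEq]
  split_ifs <;> (try simp only [false_or, or_false, false_and, and_false, true_and, and_true]) <;> omega

lemma vandermonde_sq (k : ℕ) :
    ∑ s ∈ Finset.range (k+1), Nat.choose k s * Nat.choose k s = Nat.choose (2*k) k := by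
  rw [show 2*k = k + k from by omega, Nat.add_choose_eq,
    Finset.Nat.sum_antidiagonal_eq_sum_range_succ_mk]
  refine Finset.sum_congr rfl fun s hs => ?_
  rw [Finset.mem_range] at hs
  rw [Nat.choose_symm (show s ≤ k by omega)]

lemma sum_key (d k j : ℕ) :
    (∑ s ∈ Finset.range (d+1), Nat.choose d s * Nat.choose k (j + s)) +
      (∑ s ∈ Finset.range (d+1), Nat.choose d s * Nat.choose k (j + 1 + s)) =
    ∑ s ∈ Finset.range (d+2), Nat.choose (d+1) s * Nat.choose k (j + s) := by
  have hB : ∑ s ∈ Finset.range (d+1), Nat.choose d s * Nat.choose k (j + 1 + s)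
      = ∑ s ∈ Finset.range (d+1), Nat.choose d s * Nat.choose k (j + (s + 1)) :=
    Finset.sum_congr rfl fun s _ => by rw [show j+1+s = j+(s+1) from by omega]
  have hA : ∑ s ∈ Finset.range (d+1), Nat.choose d s * Nat.choose k (j + s)
      = (∑ t ∈ Finset.range d, Nat.choose d (t+1) * Nat.choose k (j + (t+1))) + Nat.choose k j := by
    rw [Finset.sum_range_succ']
    simp
  have hT : ∑ s ∈ Finset.range (d+2), Nat.choose (d+1) s * Nat.choose k (j + s)
      = (∑ t ∈ Finset.range (d+1), Nat.choose (d+1) (t+1) * Nat.choose k (j + (t+1))) + Nat.choose k j := by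
    rw [Finset.sum_range_succ']
    simp
  have hsplit : ∑ t ∈ Finset.range (d+1), Nat.choose (d+1) (t+1) * Nat.choose k (j + (t+1))
      = ∑ t ∈ Finset.range (d+1), Nat.choose d t * Nat.choose k (j + (t+1))
        + ∑ t ∈ Finset.range (d+1), Nat.choose d (t+1) * Nat.choose k (j + (t+1)) := by
    rw [← Finset.sum_add_distrib]
    exact Finset.sum_congr rfl fun t _ => by rw [Nat.choose_succ_succ, add_mul]
  have hlast : ∑ t ∈ Finset.range (d+1), Nat.choose d (t+1) * Nat.choose k (j + (t+1))
      = ∑ t ∈ Finset.range d, Nat.choose d (t+1) * Nat.choose k (j + (t+1)) := by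
    rw [Finset.sum_range_succ, Nat.choose_succ_self, zero_mul, add_zero]
  rw [hA, hB, hT, hsplit, hlast]
  ring

/-- for odd `n ≥ 1`, in the diamond-shaped all-AND lattice DAG
with `n` layers, root `(0, 0)` and unique leaf `(n-1, 0)`, the recursive
proof number of the root (`pn = 1` at the leaf, sum of children's values at
every non-leaf node) equals the central binomial coefficient
`C(n-1, (n-1)/2)`, while the true proof number of the root (minimum
cardinality of a set of leaves solving the root, where a leaf is solved iff
it is in the set and an AND node is solved iff all its children are solved)
equals `1`. -/
theorem diamond_lattice_pn_eq_centralBinom_and_trueProofNumber_one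
    (n : ℕ) (hn : 1 ≤ n) (hodd : Odd n)
    (pn : ℕ × ℕ → ℕ)
    (hpnLeaf : pn (n - 1, 0) = 1)
    (hpnAnd : ∀ p : ℕ × ℕ, diamondValid n p → p.1 < n - 1 →
      pn p = ∑ q ∈ diamondChildren n p, pn q)
    (solved : Set (ℕ × ℕ) → ℕ × ℕ → Prop)
    (hsLeaf : ∀ L : Set (ℕ × ℕ), solved L (n - 1, 0) ↔ (n - 1, 0) ∈ L)
    (hsAnd : ∀ (L : Set (ℕ × ℕ)) (p : ℕ × ℕ), diamondValid n p → p.1 < n - 1 →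
      (solved L p ↔ ∀ q ∈ diamondChildren n p, solved L q)) :
    pn (0, 0) = Nat.choose (n - 1) ((n - 1) / 2) ∧
    sInf {m : ℕ | ∃ L : Finset (ℕ × ℕ), (∀ x ∈ L, x = (n - 1, 0)) ∧
      solved ↑L (0, 0) ∧ L.card = m} = 1 := by
  obtain ⟨k, rfl⟩ := hodd
  -- Lemma A : contracting half
  have A : ∀ d, d ≤ k → ∀ j, j ≤ d → pn (2*k - d, j) = Nat.choose d j := by
    intro d
    induction d with
    | zero =>
      intro _ j hj
      have hj0 : j = 0 := by omega
      subst hj0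
      simpa using hpnLeaf
    | succ d ih =>
      intro hd j hj
      have hik : k ≤ 2*k - (d+1) := by omega
      have hi2 : 2*k - (d+1) < 2*k := by omega
      have hval : diamondValid (2*k+1) (2*k - (d+1), j) := by
        rw [dvalid_iff]; split_ifs <;> omega
      have e1 : 2*k - (d+1) + 1 = 2*k - d := by omega
      rw [hpnAnd _ hval (show 2*k-(d+1) < 2*k+1-1 by omega)]
      rcases Nat.eq_zero_or_pos j with rfl | hj0
      · rw [children_contract_left k _ hik hi2, Finset.sum_singleton, e1,
          ih (by omega) 0 (by omega)]
        simp
      · rcases eq_or_lt_of_le hj with heq | hlt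
        · have hjj : j = 2*k - (2*k - (d+1)) := by omega
          rw [hjj, children_contract_right k _ hik hi2, Finset.sum_singleton, e1,
            show 2*k - (2*k-(d+1)) - 1 = d from by omega, ih (by omega) d (by omega),
            show 2*k - (2*k-(d+1)) = d+1 from by omega]
          simp
        · rw [children_contract_mid k _ j hik hj0 (by omega),
            Finset.sum_pair (by simp only [ne_eq, Prod.mk.injEq, not_and]; omega), e1,
            ih (by omega) (j-1) (by omega), ih (by omega) j (by omega)]
          obtain ⟨t, rfl⟩ : ∃ t, j = t + 1 := ⟨j - 1, by omega⟩
          simp [Nat.choose_succ_succ]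
  -- Lemma B : expanding half
  have B : ∀ d, d ≤ k → ∀ j, j ≤ k - d →
      pn (k - d, j) = ∑ s ∈ Finset.range (d+1), Nat.choose d s * Nat.choose k (j + s) := by
    intro d
    induction d with
    | zero =>
      intro _ j hj
      have hA := A k le_rfl j (by omega)
      rw [show 2*k - k = k from by omega] at hA
      rw [show k - 0 = k from by omega, hA, Finset.sum_range_one]
      simp
    | succ d ih =>
      intro hd j hj
      have hik : k - (d+1) < k := by omega
      have hval : diamondValid (2*k+1) (k - (d+1), j) := by
        rw [dvalid_iff]; split_ifs <;> omega
      rw [hpnAnd _ hval (show k-(d+1) < 2*k+1-1 by omega),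
        children_expand k _ j hik (by omega),
        Finset.sum_pair (by simp only [ne_eq, Prod.mk.injEq, not_and]; omega),
        show k-(d+1)+1 = k-d from by omega,
        ih (by omega) j (by omega), ih (by omega) (j+1) (by omega)]
      exact sum_key d k j
  constructor
  · -- recursive proof number of the root
    have h00 := B k le_rfl 0 (by omega)
    rw [show k - k = 0 from by omega] at h00
    rw [h00, show (2*k+1-1 : ℕ) = 2*k from by omega, show ((2*k : ℕ))/2 = k from by omega,
      ← vandermonde_sq k]
    exact Finset.sum_congr rfl fun s _ => by rw [Nat.zero_add]
  · -- true proof number of the root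
    have solvedL : ∀ d, d ≤ 2*k → ∀ j, diamondValid (2*k+1) (2*k - d, j) →
        solved (↑({((2*k : ℕ), (0:ℕ))} : Finset (ℕ × ℕ))) (2*k - d, j) := by
      intro d
      induction d with
      | zero =>
        intro _ j hv
        rw [dvalid_iff] at hv
        have hj : j = 0 := by split_ifs at hv <;> omega
        subst hj
        exact (hsLeaf _).mpr (by simp)
      | succ d ih =>
        intro hd j hv
        rw [hsAnd _ _ hv (show 2*k-(d+1) < 2*k+1-1 by omega)]
        rintro ⟨a, b⟩ hq
        rw [mem_children_iff] at hq
        have ha : a = 2*k - (d+1) + 1 := hq.2.2.1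
        have e : 2*k - d = a := by omega
        have := ih (by omega) b (by rw [e]; exact hq.2.1)
        rwa [e] at this
    have notsolved : ∀ d, d ≤ 2*k → ∀ j, diamondValid (2*k+1) (2*k - d, j) →
        ¬ solved (∅ : Set (ℕ × ℕ)) (2*k - d, j) := by
      intro d
      induction d with
      | zero =>
        intro _ j hv
        rw [dvalid_iff] at hv
        have hj : j = 0 := by split_ifs at hv <;> omega
        subst hj
        rw [show ((2*k - 0 : ℕ), (0:ℕ)) = ((2*k+1-1 : ℕ), (0:ℕ)) from by norm_num, hsLeaf]
        simp
      | succ d ih =>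
        intro hd j hv
        rw [hsAnd _ _ hv (show 2*k-(d+1) < 2*k+1-1 by omega)]
        intro hall
        have hedge : diamondEdge (2*k+1) (2*k-(d+1), j)
            (2*k-(d+1)+1, if 2*k-(d+1) < k then j else min j d) := by
          rw [edge_iff]
          rw [dvalid_iff] at hv
          split_ifs at hv ⊢ <;> omega
        have hq := (mem_children_iff k _ _ _).mpr hedge
        have e : 2*k - d = 2*k-(d+1)+1 := by omega
        exact ih (by omega) _ (by rw [e]; exact hedge.2.1) (by rw [e]; exact hall _ hq)
    have hv0 : diamondValid (2*k+1) (2*k - 2*k, 0) := by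
      rw [dvalid_iff]; split_ifs <;> omega
    have h1 : (1 : ℕ) ∈ {m : ℕ | ∃ L : Finset (ℕ × ℕ), (∀ x ∈ L, x = (2*k+1-1, 0)) ∧
        solved ↑L (0, 0) ∧ L.card = m} := by
      refine ⟨{(2*k, 0)}, ?_, ?_, by simp⟩
      · intro x hx
        rw [Finset.mem_singleton] at hx
        subst hx
        norm_num
      · have h := solvedL (2*k) le_rfl 0 hv0
        rwa [show (2*k - 2*k : ℕ) = 0 from by omega] at h
    have h0 : (0 : ℕ) ∉ {m : ℕ | ∃ L : Finset (ℕ × ℕ), (∀ x ∈ L, x = (2*k+1-1, 0)) ∧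
        solved ↑L (0, 0) ∧ L.card = m} := by
      rintro ⟨L, hLx, hsol, hcard⟩
      have hL : L = ∅ := Finset.card_eq_zero.mp hcard
      subst hL
      have h := notsolved (2*k) le_rfl 0 hv0
      rw [show (2*k - 2*k : ℕ) = 0 from by omega] at h
      exact h (by simpa using hsol)
    have hle := Nat.sInf_le h1
    have hne : sInf {m : ℕ | ∃ L : Finset (ℕ × ℕ), (∀ x ∈ L, x = (2*k+1-1, 0)) ∧
        solved ↑L (0, 0) ∧ L.card = m} ≠ 0 := by
      intro h
      rcases Nat.sInf_eq_zero.mp h with h' | h'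
      · exact h0 h'
      · rw [h'] at h1
        exact h1
    omega
end

section
/- For n ≥ 2, consider the complete layered all-AND DAG with n layers of sizes 1, 2, 3, …, n−1, 1: the single root forms layer 1, layer i has i nodes for 2 ≤ i ≤ n−1, the last layer is a single leaf, and every node of each layer has as children all nodes of the next layer. Every non-leaf node is an AND node. Then the recursive proof number of the root (pn(leaf) = 1, pn(AND node) = sum of children's values) equals (n−1)!, while the true proof number of the root (the minimum number of leaves that must be assumed solvable for the root to be solvable) equals 1. -/
def combSize (n i : ℕ) : ℕ := if i = n - 1 then 1 else i + 1

def combValid (n : ℕ) (p : ℕ × ℕ) : Prop :=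
  p.1 < n ∧ p.2 < combSize n p.1

def combEdge (n : ℕ) (p q : ℕ × ℕ) : Prop :=
  combValid n p ∧ combValid n q ∧ q.1 = p.1 + 1

open Classical in
noncomputable def combChildren (n : ℕ) (p : ℕ × ℕ) : Finset (ℕ × ℕ) :=
  (Finset.range n ×ˢ Finset.range n).filter (combEdge n p)

lemma combSize_le (n i : ℕ) (hi : i < n) : combSize n i ≤ n := by
  unfold combSize; split_ifs <;> omega

lemma combChildren_eq (n : ℕ) (i j : ℕ)
    (hi : i < n - 1) (hj : j < combSize n i) :
    combChildren n (i, j) =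
      (Finset.range (combSize n (i + 1))).image (fun k => (i + 1, k)) := by
  have hi1 : i + 1 < n := by omega
  have hle := combSize_le n (i + 1) hi1
  ext q
  simp only [combChildren, Finset.mem_filter, Finset.mem_product,
    Finset.mem_range, Finset.mem_image, combEdge, combValid]
  constructor
  · rintro ⟨⟨h1, h2⟩, _, ⟨hq1, hq2⟩, hq⟩
    exact ⟨q.2, by rwa [hq] at hq2, by rw [← hq]⟩
  · rintro ⟨k, hk, rfl⟩
    exact ⟨⟨hi1, by omega⟩, ⟨by omega, hj⟩, ⟨hi1, hk⟩, rfl⟩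

def combPN (n : ℕ) : ℕ → ℕ
  | 0 => 1
  | d + 1 => combSize n (n - 1 - d) * combPN n d

/-- for `n ≥ 2`, in the complete layered all-AND DAG with `n`
layers of sizes `1, 2, …, n-1, 1`, root `(0, 0)` and unique leaf `(n-1, 0)`,
the recursive proof number of the root (`pn = 1` at the leaf, sum of
children's values at every non-leaf node) equals `(n-1)!`, while the true
proof number of the root (minimum cardinality of a set of leaves solving the
root, where a leaf is solved iff it is in the set and an AND node is solved
iff all children are solved) equals `1`. -/
theorem comb_lattice_pn_eq_factorial_and_trueProofNumber_one
    (n : ℕ) (hn : 2 ≤ n)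
    (pn : ℕ × ℕ → ℕ)
    (hpnLeaf : pn (n - 1, 0) = 1)
    (hpnAnd : ∀ p : ℕ × ℕ, combValid n p → p.1 < n - 1 →
      pn p = ∑ q ∈ combChildren n p, pn q)
    (solved : Set (ℕ × ℕ) → ℕ × ℕ → Prop)
    (hsLeaf : ∀ L : Set (ℕ × ℕ), solved L (n - 1, 0) ↔ (n - 1, 0) ∈ L)
    (hsAnd : ∀ (L : Set (ℕ × ℕ)) (p : ℕ × ℕ), combValid n p → p.1 < n - 1 →
      (solved L p ↔ ∀ q ∈ combChildren n p, solved L q)) :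
    pn (0, 0) = Nat.factorial (n - 1) ∧
    sInf {m : ℕ | ∃ L : Finset (ℕ × ℕ), (∀ x ∈ L, x = (n - 1, 0)) ∧
      solved ↑L (0, 0) ∧ L.card = m} = 1 := by
  -- Part 1
  have key : ∀ d, d ≤ n - 1 → ∀ j, j < combSize n (n - 1 - d) →
      pn (n - 1 - d, j) = combPN n d := by
    intro d
    induction d with
    | zero =>
      intro _ j hj
      have : combSize n (n - 1) = 1 := by simp [combSize]
      rw [Nat.sub_zero] at hj ⊢
      rw [this] at hj
      interval_cases j
      simpa [combPN] using hpnLeaf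
    | succ d ih =>
      intro hd j hj
      set i := n - 1 - (d + 1) with hi_def
      have hi : i < n - 1 := by omega
      have hsucc : i + 1 = n - 1 - d := by omega
      rw [hpnAnd (i, j) ⟨by omega, hj⟩ hi,
        combChildren_eq n i j hi hj,
        Finset.sum_image (by intro a _ b _ h; simpa using h)]
      have : ∀ k ∈ Finset.range (combSize n (i + 1)), pn (i + 1, k) = combPN n d := by
        intro k hk
        rw [hsucc] at hk ⊢
        exact ih (by omega) k (Finset.mem_range.mp hk)
      rw [Finset.sum_congr rfl this, Finset.sum_const, smul_eq_mul]
      show _ = combSize n (n - 1 - d) * combPN n d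
      rw [Finset.card_range, hsucc]
  have hfact : ∀ d, 1 ≤ d → d ≤ n - 1 →
      combPN n d * Nat.factorial (n - d) = Nat.factorial (n - 1) := by
    intro d
    induction d with
    | zero => omega
    | succ d ih =>
      intro _ hd
      rcases Nat.eq_zero_or_pos d with rfl | hd0
      · have : combSize n (n - 1) = 1 := by simp [combSize]
        simp [combPN, this]
      · have h1 : combSize n (n - 1 - d) = n - d := by
          unfold combSize; split_ifs with h <;> omega
        have h2 : n - d = (n - (d + 1)) + 1 := by omega
        calc combPN n (d + 1) * Nat.factorial (n - (d + 1))
            = combPN n d * ((n - d) * Nat.factorial (n - (d + 1))) := by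
              simp [combPN, h1]; ring
          _ = combPN n d * Nat.factorial (n - d) := by
              rw [h2, Nat.factorial_succ, ← h2]
          _ = Nat.factorial (n - 1) := ih hd0 (by omega)
  have part1 : pn (0, 0) = Nat.factorial (n - 1) := by
    have h0 : (0 : ℕ) = n - 1 - (n - 1) := by omega
    have hs : combSize n 0 = 1 := by unfold combSize; split_ifs <;> omega
    have := key (n - 1) le_rfl 0 (by rw [← h0, hs]; omega)
    rw [← h0] at this
    rw [this]
    have := hfact (n - 1) (by omega) le_rfl
    have hn1 : n - (n - 1) = 1 := by omega
    rw [hn1, Nat.factorial_one, mul_one] at this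
    exact this
  refine ⟨part1, ?_⟩
  -- Part 2
  set S := {m : ℕ | ∃ L : Finset (ℕ × ℕ), (∀ x ∈ L, x = (n - 1, 0)) ∧
      solved ↑L (0, 0) ∧ L.card = m} with hS
  have h1mem : 1 ∈ S := by
    refine ⟨{(n - 1, 0)}, by simp, ?_, by simp⟩
    have all : ∀ d, d ≤ n - 1 → ∀ j, j < combSize n (n - 1 - d) →
        solved ↑({(n - 1, 0)} : Finset (ℕ × ℕ)) (n - 1 - d, j) := by
      intro d
      induction d with
      | zero =>
        intro _ j hj
        have : combSize n (n - 1) = 1 := by simp [combSize]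
        rw [Nat.sub_zero] at hj ⊢
        rw [this] at hj
        interval_cases j
        rw [hsLeaf]; simp
      | succ d ih =>
        intro hd j hj
        set i := n - 1 - (d + 1) with hi_def
        have hi : i < n - 1 := by omega
        have hsucc : i + 1 = n - 1 - d := by omega
        rw [hsAnd _ (i, j) ⟨by omega, hj⟩ hi]
        intro q hq
        rw [combChildren_eq n i j hi hj, Finset.mem_image] at hq
        obtain ⟨k, hk, rfl⟩ := hq
        rw [hsucc] at hk ⊢
        exact ih (by omega) k (Finset.mem_range.mp hk)
    have h0 : (0 : ℕ) = n - 1 - (n - 1) := by omega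
    have hs : combSize n 0 = 1 := by unfold combSize; split_ifs <;> omega
    have := all (n - 1) le_rfl 0 (by rw [← h0, hs]; omega)
    rwa [← h0] at this
  have h0notmem : 0 ∉ S := by
    rintro ⟨L, -, hsolved, hcard⟩
    have hL : L = ∅ := Finset.card_eq_zero.mp hcard
    subst hL
    -- propagate down the chain (i, 0)
    have chain : ∀ i, i ≤ n - 1 → solved ↑(∅ : Finset (ℕ × ℕ)) (i, 0) := by
      intro i
      induction i with
      | zero => intro _; exact hsolved
      | succ i ih =>
        intro hi
        have hi' : i < n - 1 := by omega
        have hv : combValid n (i, 0) := by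
          refine ⟨by omega, ?_⟩
          unfold combSize; split_ifs <;> omega
        have := (hsAnd _ (i, 0) hv hi').mp (ih (by omega)) (i + 1, 0)
        apply this
        rw [combChildren_eq n i 0 hi' hv.2, Finset.mem_image]
        refine ⟨0, Finset.mem_range.mpr ?_, rfl⟩
        unfold combSize; split_ifs <;> omega
    have := chain (n - 1) le_rfl
    rw [hsLeaf] at this
    simp at this
  have hne : S.Nonempty := ⟨1, h1mem⟩
  have hle : sInf S ≤ 1 := Nat.sInf_le h1mem
  have hpos : sInf S ≠ 0 := by
    intro h
    rcases (Nat.sInf_eq_zero.mp h) with h0 | h0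
    · exact h0notmem h0
    · rw [h0] at h1mem; exact h1mem
  omega
end

section
/- Let φ be a CNF formula over variables indexed by Fin n with clauses C_1, …, C_k, each clause a nonempty finite set of literals (a literal being a pair (j, b) with j : Fin n, b : Bool). If φ is unsatisfiable, then every finite set S of literals such that for every j : Fin n, S contains (j, true) or (j, false), and for every clause C_i, S ∩ C_i is nonempty, has cardinality at least n + 1. -/
/-- if a CNF formula (clauses `C i`, each a nonempty finite set
of literals `(j, b)`) is unsatisfiable, then every finite set `S` of literals
containing `(j, true)` or `(j, false)` for every variable `j` and meeting
every clause has cardinality at least `n + 1`. -/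
theorem unsat_hitting_set_card_ge_n_succ
    (n k : ℕ) (C : Fin k → Finset (Fin n × Bool))
    (hC : ∀ i, (C i).Nonempty)
    (hunsat : ¬ ∃ α : Fin n → Bool, ∀ i, ∃ l ∈ C i, α l.1 = l.2)
    (S : Finset (Fin n × Bool))
    (hvar : ∀ j : Fin n, (j, true) ∈ S ∨ (j, false) ∈ S)
    (hcl : ∀ i, (S ∩ C i).Nonempty) :
    n + 1 ≤ S.card := by
  by_contra h
  push_neg at h
  have hle : S.card ≤ n := Nat.lt_succ_iff.mp h
  have himg : S.image Prod.fst = Finset.univ := by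
    apply Finset.eq_univ_of_forall
    intro j
    rcases hvar j with hj | hj
    · exact Finset.mem_image.mpr ⟨(j, true), hj, rfl⟩
    · exact Finset.mem_image.mpr ⟨(j, false), hj, rfl⟩
  have hcard : (S.image Prod.fst).card = S.card := by
    have h1 : (S.image Prod.fst).card = n := by
      rw [himg]; simp
    have h2 : (S.image Prod.fst).card ≤ S.card := Finset.card_image_le
    omega
  have hinj : Set.InjOn Prod.fst (S : Set (Fin n × Bool)) :=
    Finset.injOn_of_card_image_eq hcard
  apply hunsat
  refine ⟨fun j => decide ((j, true) ∈ S), fun i => ?_⟩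
  obtain ⟨l, hl⟩ := hcl i
  rw [Finset.mem_inter] at hl
  refine ⟨l, hl.2, ?_⟩
  rcases l with ⟨j, b⟩
  cases b
  · simp only [decide_eq_false_iff_not]
    intro ht
    have := hinj ht hl.1 rfl
    simp at this
  · simp only [decide_eq_true_eq]
    exact hl.1
end
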